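/- Let n, m ≥ 1, let ξ ∈ ℝⁿ, let Ω ∈ ℝ^{n×n} be positive definite with decomposition Ω = D_Ω Ω̄ D_Ω, and let a, b : {1,…,m} → {1,…,n} encode m pairwise preferences (the a_k-th point preferred to the b_k-th point, with a_k ≠ b_k). Let W ∈ ℝ^{m×n} have rows W_k = e_{a_k} − e_{b_k} (difference of standard basis vectors). Then for every f ∈ ℝⁿ, the preference likelihood times the normal prior density satisfies (∏_{k=1}^m Φ₁(f_{a_k} − f_{b_k})) · φ_n(f − ξ; Ω) = Φ_m(W ξ; W Ω Wᵀ + I_m) · sun(f), where sun is the SUN_{n,m}(ξ, Ω, Ω̄ D_Ω Wᵀ, W ξ, W Ω Wᵀ + I_m) density; i.e., the exact posterior of the latent preference function values is a unified skew-normal. -/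

import Mathlib

open MeasureTheory Real Matrix

/-- Centered multivariate normal density with covariance `S`. -/
noncomputable def gaussPdf {ι : Type*} [Fintype ι] [DecidableEq ι]
    (S : Matrix ι ι ℝ) (x : ι → ℝ) : ℝ :=
  (2 * π) ^ (-(Fintype.card ι : ℝ) / 2) * S.det ^ (-(1 : ℝ) / 2) *
    Real.exp (-(1 / 2) * (x ⬝ᵥ S⁻¹.mulVec x))

/-- Centered multivariate normal CDF with covariance `S`, evaluated at `a`. -/
noncomputable def gaussCdf {ι : Type*} [Fintype ι] [DecidableEq ι]
    (S : Matrix ι ι ℝ) (a : ι → ℝ) : ℝ :=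
  ∫ t in {t : ι → ℝ | ∀ i, t i ≤ a i}, gaussPdf S t

/-- `D_Ω`: diagonal matrix of square roots of the diagonal of `Ω`. -/
noncomputable def matD {ι : Type*} [Fintype ι] [DecidableEq ι]
    (Ω : Matrix ι ι ℝ) : Matrix ι ι ℝ :=
  Matrix.diagonal fun i => Real.sqrt (Ω i i)

/-- `Ω̄`: the correlation matrix of `Ω`, so that `Ω = D_Ω Ω̄ D_Ω`. -/
noncomputable def matCorr {ι : Type*} [Fintype ι] [DecidableEq ι]
    (Ω : Matrix ι ι ℝ) : Matrix ι ι ℝ :=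
  (matD Ω)⁻¹ * Ω * (matD Ω)⁻¹

/-- Unified skew-normal `SUN(ξ, Ω, Δ, γ, Γ)` density. -/
noncomputable def sunPdf {ι κ : Type*} [Fintype ι] [DecidableEq ι] [Fintype κ] [DecidableEq κ]
    (ξ : ι → ℝ) (Ω : Matrix ι ι ℝ) (Δ : Matrix ι κ ℝ) (γ : κ → ℝ) (Γ : Matrix κ κ ℝ)
    (z : ι → ℝ) : ℝ :=
  gaussPdf Ω (z - ξ) *
    gaussCdf (Γ - Δᵀ * (matCorr Ω)⁻¹ * Δ)
      (γ + (Δᵀ * (matCorr Ω)⁻¹ * (matD Ω)⁻¹).mulVec (z - ξ)) /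
  gaussCdf Γ γ

/-- Standard univariate normal CDF `Φ₁`. -/
noncomputable def stdNormalCdf (a : ℝ) : ℝ :=
  ∫ t in Set.Iic a, (2 * π) ^ (-(1 : ℝ) / 2) * Real.exp (-(t ^ 2) / 2)

/-!
With `Δ = Ω̄ D_Ω Wᵀ` one has `Δᵀ Ω̄⁻¹ Δ = W Ω Wᵀ` and `Δᵀ Ω̄⁻¹ D_Ω⁻¹ = W`, so the SUN density
collapses to `φ_n(f - ξ; Ω) Φ_m(W f; I_m) / Φ_m(W ξ; W Ω Wᵀ + I_m)`. A normal CDF with identity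
covariance factorises by Fubini into `∏ₖ Φ₁((W f)ₖ) = ∏ₖ Φ₁(f_{aₖ} - f_{bₖ})`, and the normalising
constant can be cancelled because `W Ω Wᵀ + I_m` is positive definite, which makes its CDF positive.
-/

open scoped MatrixOrder in
theorem Matrix.PosDef.exists_pos_mul_dotProduct_self_le {ι : Type*} [Fintype ι] [DecidableEq ι]
    {M : Matrix ι ι ℝ} (hM : M.PosDef) : ∃ c > 0, ∀ x : ι → ℝ, c * (x ⬝ᵥ x) ≤ x ⬝ᵥ M *ᵥ x := by
  cases isEmpty_or_nonempty ι
  · exact ⟨1, one_pos, fun x => by simp [dotProduct]⟩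
  obtain ⟨c, hc, hcM⟩ := (CFC.exists_pos_algebraMap_le_iff hM.isStrictlyPositive.isSelfAdjoint).2
    fun _ hx => hM.isStrictlyPositive.spectrum_pos hx
  refine ⟨c, hc, fun x => ?_⟩
  simpa [sub_mulVec, dotProduct_sub, Algebra.algebraMap_eq_smul_one, smul_mulVec,
    dotProduct_smul] using (Matrix.le_iff.1 hcM).dotProduct_mulVec_nonneg x

lemma setOf_forall_le_eq_pi {ι : Type*} (a : ι → ℝ) :
    {t : ι → ℝ | ∀ i, t i ≤ a i} = Set.univ.pi fun i => Set.Iic (a i) :=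
  (Set.pi_univ_Iic a).symm

section Gaussian

variable {ι : Type*} [Fintype ι] [DecidableEq ι]

lemma gaussPdf_pos {S : Matrix ι ι ℝ} (hS : 0 < S.det) (x : ι → ℝ) : 0 < gaussPdf S x := by
  unfold gaussPdf
  positivity

lemma integrable_gaussPdf {S : Matrix ι ι ℝ} (hS : S.PosDef) : Integrable (gaussPdf S) := by
  -- the density is dominated by a product of one-dimensional Gaussians
  obtain ⟨c, hc, hcS⟩ := hS.inv.exists_pos_mul_dotProduct_self_le
  have hbound : Integrable fun x : ι → ℝ =>
      (2 * π) ^ (-(Fintype.card ι : ℝ) / 2) * S.det ^ (-(1 : ℝ) / 2) *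
        ∏ i, Real.exp (-(c / 2) * x i ^ 2) :=
    (Integrable.fintype_prod (f := fun _ t => Real.exp (-(c / 2) * t ^ 2))
      fun _ => integrable_exp_neg_mul_sq (by positivity)).const_mul _
  refine hbound.mono' (by unfold gaussPdf; fun_prop) (.of_forall fun x => ?_)
  have hq : ∑ i, -(c / 2) * x i ^ 2 = -(1 / 2) * (c * (x ⬝ᵥ x)) := by
    rw [← Finset.mul_sum, dotProduct]
    simp only [sq]
    ring
  have hdet := hS.det_pos
  rw [Real.norm_of_nonneg (gaussPdf_pos hdet x).le, gaussPdf, ← Real.exp_sum, hq]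
  exact mul_le_mul_of_nonneg_left (Real.exp_le_exp.2 (by linarith [hcS x])) (by positivity)

lemma gaussCdf_pos {S : Matrix ι ι ℝ} (hS : S.PosDef) (a : ι → ℝ) : 0 < gaussCdf S a := by
  have hsupp : Function.support (gaussPdf S) = Set.univ :=
    Function.support_eq_univ fun x => (gaussPdf_pos hS.det_pos x).ne'
  rw [gaussCdf, setIntegral_pos_iff_support_of_nonneg_ae
    (.of_forall fun x => (gaussPdf_pos hS.det_pos x).le) (integrable_gaussPdf hS).integrableOn,
    hsupp, Set.univ_inter, setOf_forall_le_eq_pi, volume_pi_pi, CanonicallyOrderedAdd.prod_pos]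
  simp [Real.volume_Iic]

lemma gaussPdf_one (t : ι → ℝ) :
    gaussPdf (1 : Matrix ι ι ℝ) t
      = ∏ i, (2 * π) ^ (-(1 : ℝ) / 2) * Real.exp (-(t i ^ 2) / 2) := by
  have hcard : (2 * π) ^ (-(Fintype.card ι : ℝ) / 2)
      = ∏ _i : ι, (2 * π) ^ (-(1 : ℝ) / 2) := by
    rw [Finset.prod_const, Finset.card_univ, ← Real.rpow_natCast, ← Real.rpow_mul two_pi_pos.le]
    ring_nf
  rw [gaussPdf, inv_one, det_one, one_mulVec, Real.one_rpow, mul_one, hcard,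
    Finset.prod_mul_distrib, ← Real.exp_sum, dotProduct, Finset.mul_sum]
  congr 3 with i
  ring

lemma gaussCdf_one (a : ι → ℝ) : gaussCdf (1 : Matrix ι ι ℝ) a = ∏ i, stdNormalCdf (a i) := by
  rw [gaussCdf, setOf_forall_le_eq_pi, volume_pi, Measure.restrict_pi_pi]
  simp_rw [gaussPdf_one]
  exact integral_fintype_prod_eq_prod fun _ u =>
    (2 * π) ^ (-(1 : ℝ) / 2) * Real.exp (-(u ^ 2) / 2)

end Gaussian

section SkewNormal

variable {ι κ : Type*} [Fintype ι] [DecidableEq ι]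

lemma transpose_matD (Ω : Matrix ι ι ℝ) : (matD Ω)ᵀ = matD Ω :=
  diagonal_transpose _

lemma isUnit_det_matD {Ω : Matrix ι ι ℝ} (hΩ : ∀ i, 0 < Ω i i) : IsUnit (matD Ω).det := by
  rw [matD, det_diagonal]
  exact isUnit_iff_ne_zero.2 (Finset.prod_ne_zero_iff.2 fun i _ => (Real.sqrt_pos.2 (hΩ i)).ne')

lemma matCorr_inv {Ω : Matrix ι ι ℝ} (hD : IsUnit (matD Ω).det) :
    (matCorr Ω)⁻¹ = matD Ω * Ω⁻¹ * matD Ω := by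
  rw [matCorr, Matrix.mul_inv_rev, Matrix.mul_inv_rev, nonsing_inv_nonsing_inv _ hD, mul_assoc]

lemma transpose_matCorr_mul_matD_mul_transpose_mul_inv {Ω : Matrix ι ι ℝ} (hΩ : Ω.PosDef)
    (W : Matrix κ ι ℝ) : (matCorr Ω * matD Ω * Wᵀ)ᵀ * (matCorr Ω)⁻¹ = W * matD Ω := by
  have hD := isUnit_det_matD fun _ => hΩ.diag_pos
  have hΩ' : IsUnit Ω.det := (isUnit_iff_isUnit_det _).1 hΩ.isUnit
  have hΩt : Ωᵀ = Ω := hΩ.isHermitian.eq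
  rw [matCorr_inv hD, matCorr]
  simp only [transpose_mul, transpose_transpose, transpose_nonsing_inv, transpose_matD, hΩt,
    Matrix.mul_assoc, nonsing_inv_mul_cancel_left _ _ hD,
    mul_nonsing_inv_cancel_left _ _ hΩ']

lemma sunPdf_matCorr_mul_matD_mul_transpose [Fintype κ] [DecidableEq κ] {Ω : Matrix ι ι ℝ}
    (hΩ : Ω.PosDef) (ξ : ι → ℝ) (W : Matrix κ ι ℝ) (γ : κ → ℝ) (Γ : Matrix κ κ ℝ) (z : ι → ℝ) :
    sunPdf ξ Ω (matCorr Ω * matD Ω * Wᵀ) γ Γ z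
      = gaussPdf Ω (z - ξ) * gaussCdf (Γ - W * Ω * Wᵀ) (γ + W *ᵥ (z - ξ)) / gaussCdf Γ γ := by
  have hD := isUnit_det_matD fun _ => hΩ.diag_pos
  have hΔ := transpose_matCorr_mul_matD_mul_transpose_mul_inv hΩ W
  have hCD : matCorr Ω * matD Ω = (matD Ω)⁻¹ * Ω := by
    rw [matCorr, Matrix.mul_assoc, nonsing_inv_mul _ hD, Matrix.mul_one]
  rw [sunPdf, hΔ, mul_nonsing_inv_cancel_right _ _ hD, hCD]
  simp only [Matrix.mul_assoc, mul_nonsing_inv_cancel_left _ _ hD]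

end SkewNormal

theorem preference_posterior_is_sun_general (n m : ℕ)
    (ξ : Fin n → ℝ) (Ω : Matrix (Fin n) (Fin n) ℝ) (hΩ : Ω.PosDef)
    (a b : Fin m → Fin n)
    (W : Matrix (Fin m) (Fin n) ℝ)
    (hW : ∀ k j, W k j = (if j = a k then (1 : ℝ) else 0) - (if j = b k then (1 : ℝ) else 0)) :
    ∀ f : Fin n → ℝ,
      (∏ k : Fin m, stdNormalCdf (f (a k) - f (b k))) * gaussPdf Ω (f - ξ) =
        gaussCdf (W * Ω * Wᵀ + 1) (W.mulVec ξ) *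
          sunPdf ξ Ω (matCorr Ω * matD Ω * Wᵀ) (W.mulVec ξ) (W * Ω * Wᵀ + 1) f := by
  intro f
  have hΓ : (W * Ω * Wᵀ + 1).PosDef := by
    refine PosDef.posSemidef_add ?_ PosDef.one
    simpa using hΩ.posSemidef.mul_mul_conjTranspose_same W
  have hWf : W *ᵥ f = fun k => f (a k) - f (b k) := by
    ext k
    simp [mulVec, dotProduct, hW, sub_mul, Finset.sum_sub_distrib]
  rw [sunPdf_matCorr_mul_matD_mul_transpose hΩ, add_sub_cancel_left, ← mulVec_add,
    add_sub_cancel, gaussCdf_one, hWf]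
  field_simp [(gaussCdf_pos hΓ _).ne']

/-- the exact posterior of the latent preference-function values is a unified
skew-normal: the preference likelihood `∏ₖ Φ₁(f_{aₖ} − f_{bₖ})` times the normal prior density
equals `Φ_m(W ξ; W Ω Wᵀ + I_m)` times the `SUN_{n,m}(ξ, Ω, Ω̄ D_Ω Wᵀ, W ξ, W Ω Wᵀ + I_m)`
density, where `W` has rows `e_{aₖ} − e_{bₖ}`. -/
theorem preference_posterior_is_sun (n m : ℕ) (hn : 1 ≤ n) (hm : 1 ≤ m)
    (ξ : Fin n → ℝ) (Ω : Matrix (Fin n) (Fin n) ℝ) (hΩ : Ω.PosDef)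
    (a b : Fin m → Fin n) (hab : ∀ k, a k ≠ b k)
    (W : Matrix (Fin m) (Fin n) ℝ)
    (hW : ∀ k j, W k j = (if j = a k then (1 : ℝ) else 0) - (if j = b k then (1 : ℝ) else 0)) :
    ∀ f : Fin n → ℝ,
      (∏ k : Fin m, stdNormalCdf (f (a k) - f (b k))) * gaussPdf Ω (f - ξ) =
        gaussCdf (W * Ω * Wᵀ + 1) (W.mulVec ξ) *
          sunPdf ξ Ω (matCorr Ω * matD Ω * Wᵀ) (W.mulVec ξ) (W * Ω * Wᵀ + 1) f :=
  preference_posterior_is_sun_general n m ξ Ω hΩ a b W hW
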